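/- arXiv:2105.11338 — 3 statements merged into one kernel-verified Lean document; each statement's English description precedes it below -/
import Mathlib

section
/- Let P and Q be probability measures on a countable measurable space (with all subsets measurable) and let α ∈ [0,1]. Then there exist finite measures μ, μ₀, μ₁ on this space such that μ₀ and μ₁ are mutually singular, P = (1−α)·μ + μ₀, and Q = μ + μ₁. (Equivalently, writing μ = (1−δ)𝒟, μ₀ = (1−(1−α)(1−δ))𝒟₀′ and μ₁ = δ𝒟₁′ for probability measures 𝒟, 𝒟₀′, 𝒟₁′ and some δ ∈ [0,1], one has P = (1−α)(1−δ)𝒟 + (1−(1−α)(1−δ))𝒟₀′ and Q = (1−δ)𝒟 + δ𝒟₁′ with 𝒟₀′ and 𝒟₁′ supported on disjoint sets.) -/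
/-!
The Hahn decomposition of `P / (1 - α)` against `Q` splits the space into a part where
`P / (1 - α) ≤ Q` and a part where `Q ≤ P / (1 - α)`; the smaller of the two measures on each
part is the common part `μ`, and the excesses `P / (1 - α) - Q` and `Q - P / (1 - α)` live on
complementary sets. Rescaling by `1 - α` gives the decomposition of `P`. When `1 - α = 0`
(truncated subtraction in `ℝ≥0`) one takes `μ = Q`, `μ₀ = P`, `μ₁ = 0`.
-/

open MeasureTheory Measure
open scoped NNReal

namespace MeasureTheory

variable {Ω : Type*} [MeasurableSpace Ω]

lemma IsHahnDecomposition.restrict_add_restrict_compl_add_sub {μ ν : Measure Ω} {s : Set Ω}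
    [IsFiniteMeasure ν] (hs : IsHahnDecomposition μ ν s) :
    μ.restrict s + ν.restrict sᶜ + (μ - ν) = μ := by
  have hsub : μ - ν = μ.restrict sᶜ - ν.restrict sᶜ := by
    rw [← restrict_add_restrict_compl (μ := μ - ν) hs.measurableSet,
      restrict_eq_zero.2 (sub_apply_eq_zero_of_isHahnDecomposition hs), zero_add,
      restrict_sub_eq_restrict_sub_restrict hs.measurableSet.compl]
  rw [hsub, add_assoc, add_comm (ν.restrict sᶜ), sub_add_cancel_of_le hs.ge_on_compl,
    restrict_add_restrict_compl hs.measurableSet]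

theorem Measure.exists_eq_add_sub_and_eq_add_sub (μ ν : Measure Ω) [IsFiniteMeasure μ]
    [IsFiniteMeasure ν] :
    ∃ ρ : Measure Ω, IsFiniteMeasure ρ ∧ μ = ρ + (μ - ν) ∧ ν = ρ + (ν - μ) := by
  obtain ⟨s, hs⟩ := exists_isHahnDecomposition μ ν
  have hν := hs.compl.restrict_add_restrict_compl_add_sub
  rw [compl_compl, add_comm (ν.restrict sᶜ)] at hν
  exact ⟨μ.restrict s + ν.restrict sᶜ, inferInstance,
    hs.restrict_add_restrict_compl_add_sub.symm, hν.symm⟩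

end MeasureTheory

theorem mostly_disj_measure_decomposition_general
    {Ω : Type*} [MeasurableSpace Ω]
    (P Q : Measure Ω) [IsProbabilityMeasure P] [IsProbabilityMeasure Q]
    (α : ℝ≥0) :
    ∃ (μ μ₀ μ₁ : Measure Ω), IsFiniteMeasure μ ∧ IsFiniteMeasure μ₀ ∧
      IsFiniteMeasure μ₁ ∧ Measure.MutuallySingular μ₀ μ₁ ∧
      P = (1 - α) • μ + μ₀ ∧ Q = μ + μ₁ := by
  set c := 1 - α
  rcases eq_or_ne c 0 with hc | hc
  · exact ⟨Q, P, 0, inferInstance, inferInstance, inferInstance,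
      MutuallySingular.zero_right, by simp [hc], by simp⟩
  obtain ⟨μ, hμ, hP, hQ⟩ := exists_eq_add_sub_and_eq_add_sub (c⁻¹ • P) Q
  refine ⟨μ, c • (c⁻¹ • P - Q), Q - c⁻¹ • P, hμ, inferInstance, inferInstance,
    mutually_singular_measure_sub.smul_nnreal c, ?_, hQ⟩
  calc P = c • (c⁻¹ • P) := by rw [smul_smul, mul_inv_cancel₀ hc, one_smul]
    _ = c • μ + c • (c⁻¹ • P - Q) := by rw [← smul_add, ← hP]

/-- Decomposition of two probability measures `P, Q` on a countable
measurable space (all subsets measurable): for any `α ∈ [0,1]` there are finite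
measures `μ, μ₀, μ₁` with `μ₀` and `μ₁` mutually singular, `P = (1-α)•μ + μ₀`
and `Q = μ + μ₁`. -/
theorem mostly_disj_measure_decomposition
    {Ω : Type*} [Countable Ω] [MeasurableSpace Ω]
    (hmeas : ∀ s : Set Ω, MeasurableSet s)
    (P Q : Measure Ω) [IsProbabilityMeasure P] [IsProbabilityMeasure Q]
    (α : ℝ≥0) (hα : α ≤ 1) :
    ∃ (μ μ₀ μ₁ : Measure Ω), IsFiniteMeasure μ ∧ IsFiniteMeasure μ₀ ∧
      IsFiniteMeasure μ₁ ∧ Measure.MutuallySingular μ₀ μ₁ ∧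
      P = (1 - α) • μ + μ₀ ∧ Q = μ + μ₁ :=
  mostly_disj_measure_decomposition_general P Q α
end

section
/- Let c ∈ (0,1) and p ∈ (0, (1−c)/2). Let k be a positive integer such that c·k is an integer, and let Y₁, …, Y_k be {0,1}-valued random variables on a probability space with E[Σ_{i=1}^k Y_i] = p·k. Then there exists a subset S ⊆ {1,…,k} with |S| = c·k such that Pr[Y_j = 0 for all j ∈ S] > e^{−c·k·ln(e/c) − 1}. -/
open MeasureTheory Finset Real Nat

/-! Markov's inequality bounds the probability that more than `(1 - c) k` of the `Y j` equal `1`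
by `p / (1 - c) < 1 / 2`. Outside that event some `l = c k` of them vanish, so the `k.choose l`
events `{∀ j ∈ S, Y j = 0}` with `#S = l` cover probability more than `1 / 2`. As
`k.choose l ≤ (e k / l) ^ l = exp (c k log (e / c))`, one of them has probability more than
`exp (-c k log (e / c)) / 2 > exp (-c k log (e / c) - 1)`. -/

theorem Nat.choose_le_exp_one_mul_div_pow (n k : ℕ) :
    (n.choose k : ℝ) ≤ (exp 1 * n / k) ^ k := by
  rcases k.eq_zero_or_pos with rfl | hk
  · simp
  have hk' : (0 : ℝ) < k := by exact_mod_cast hk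
  have hfact : 1 / (k ! : ℝ) ≤ exp k / (k : ℝ) ^ k := by
    rw [le_div_iff₀ (by positivity), one_div_mul_eq_div]
    exact Real.pow_div_factorial_le_exp (x := k) hk'.le k
  calc (n.choose k : ℝ) ≤ (n : ℝ) ^ k / k ! := Nat.choose_le_pow_div k n
    _ ≤ (n : ℝ) ^ k * (exp k / (k : ℝ) ^ k) := by
        rw [div_eq_mul_one_div]; gcongr
    _ = (exp 1 * n / k) ^ k := by rw [div_pow, mul_pow, ← exp_one_pow]; ring

theorem Nat.choose_le_exp_mul_log (n k : ℕ) :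
    (n.choose k : ℝ) ≤ exp (k * Real.log (exp 1 * n / k)) := by
  rcases k.eq_zero_or_pos with rfl | hk
  · simp
  rcases n.eq_zero_or_pos with rfl | hn
  · simp [Nat.choose_eq_zero_of_lt hk]
  rw [exp_nat_mul, exp_log (by positivity)]
  exact Nat.choose_le_exp_one_mul_div_pow n k

theorem exists_card_eq_forall_eq_zero_of_sum_le {ι : Type*} [Fintype ι]
    {y : ι → ℝ} (hy : ∀ j, y j = 0 ∨ y j = 1) {l : ℕ}
    (hsum : ∑ j, y j ≤ Fintype.card ι - l) :
    ∃ S : Finset ι, S.card = l ∧ ∀ j ∈ S, y j = 0 := by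
  have hsum_eq : ∑ j, y j = #{j | y j ≠ 0} := by
    rw [← sum_boole]
    exact sum_congr rfl fun j _ => by rcases hy j with h | h <;> simp [h]
  have hcard : #{j | y j = 0} + #{j | y j ≠ 0} = Fintype.card ι :=
    card_filter_add_card_filter_not _
  have hl : l ≤ #{j | y j = 0} := by
    have : (l : ℝ) ≤ #{j | y j = 0} := by
      rw [hsum_eq, ← hcard] at hsum
      push_cast at hsum
      linarith
    exact_mod_cast this
  obtain ⟨S, hS, rfl⟩ := exists_subset_card_eq hl
  exact ⟨S, rfl, fun j hj => (mem_filter.1 (hS hj)).2⟩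

theorem one_le_sum_measureReal_silent_add {ι Ω : Type*} [Fintype ι]
    [MeasurableSpace Ω] (ℙ : Measure Ω) [IsProbabilityMeasure ℙ]
    {Y : ι → Ω → ℝ} (hY01 : ∀ j ω, Y j ω = 0 ∨ Y j ω = 1) (l : ℕ) :
    1 ≤ ∑ S ∈ powersetCard l univ, ℙ.real {ω | ∀ j ∈ S, Y j ω = 0}
      + ℙ.real {ω | (Fintype.card ι : ℝ) - l < ∑ j, Y j ω} := by
  have hcover : Set.univ ⊆ (⋃ S ∈ powersetCard l univ, {ω | ∀ j ∈ S, Y j ω = 0})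
      ∪ {ω | (Fintype.card ι : ℝ) - l < ∑ j, Y j ω} := by
    intro ω _
    by_cases h : (Fintype.card ι : ℝ) - l < ∑ j, Y j ω
    · exact Or.inr h
    obtain ⟨S, hS, hzero⟩ := exists_card_eq_forall_eq_zero_of_sum_le (hY01 · ω) (not_lt.1 h)
    exact Or.inl (Set.mem_biUnion (mem_powersetCard_univ.2 hS) hzero)
  calc 1 = ℙ.real Set.univ := probReal_univ.symm
    _ ≤ _ := (measureReal_mono hcover).trans (measureReal_union_le _ _)
    _ ≤ _ := add_le_add_left (measureReal_biUnion_finset_le _ _) _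

theorem sub_mul_one_sub_sum_measureReal_silent_le_integral {ι Ω : Type*} [Fintype ι]
    [MeasurableSpace Ω] (ℙ : Measure Ω) [IsProbabilityMeasure ℙ]
    {Y : ι → Ω → ℝ} (hYmeas : ∀ j, Measurable (Y j))
    (hY01 : ∀ j ω, Y j ω = 0 ∨ Y j ω = 1) {l : ℕ} (hl : l ≤ Fintype.card ι) :
    ((Fintype.card ι : ℝ) - l) *
        (1 - ∑ S ∈ powersetCard l univ, ℙ.real {ω | ∀ j ∈ S, Y j ω = 0})
      ≤ ∫ ω, ∑ j, Y j ω ∂ℙ := by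
  set t : ℝ := (Fintype.card ι : ℝ) - l
  have ht : 0 ≤ t := sub_nonneg.2 (by exact_mod_cast hl)
  have hint : Integrable (fun ω => ∑ j, Y j ω) ℙ :=
    integrable_finsetSum _ fun j _ => Integrable.of_bound (hYmeas j).aestronglyMeasurable 1
      (ae_of_all _ fun ω => by rcases hY01 j ω with h | h <;> simp [h])
  have hnonneg : 0 ≤ᵐ[ℙ] fun ω => ∑ j, Y j ω :=
    ae_of_all _ fun ω => sum_nonneg fun j _ => by rcases hY01 j ω with h | h <;> simp [h]
  calc t * (1 - ∑ S ∈ powersetCard l univ, ℙ.real {ω | ∀ j ∈ S, Y j ω = 0})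
      ≤ t * ℙ.real {ω | t < ∑ j, Y j ω} := by
        gcongr
        linarith [one_le_sum_measureReal_silent_add ℙ hY01 l]
    _ ≤ t * ℙ.real {ω | t ≤ ∑ j, Y j ω} :=
        mul_le_mul_of_nonneg_left
          (measureReal_mono (Set.ofPred_subset_ofPred.2 fun _ => le_of_lt)) ht
    _ ≤ ∫ ω, ∑ j, Y j ω ∂ℙ := mul_meas_ge_le_integral_of_nonneg hnonneg hint t

theorem find_large_silent_set_general
    {Ω : Type*} [MeasurableSpace Ω] (ℙ : Measure Ω) [IsProbabilityMeasure ℙ]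
    (c p : ℝ) (hc1 : c < 1) (hp : p < (1 - c) / 2)
    (k : ℕ) (hk : 0 < k) (l : ℕ) (hl : (l : ℝ) = c * k)
    (Y : Fin k → Ω → ℝ) (hYmeas : ∀ j, Measurable (Y j))
    (hY01 : ∀ j ω, Y j ω = 0 ∨ Y j ω = 1)
    (hE : ∫ ω, (∑ j, Y j ω) ∂ℙ = p * k) :
    ∃ S : Finset (Fin k), S.card = l ∧
      ℙ {ω | ∀ j ∈ S, Y j ω = 0} >
        ENNReal.ofReal (Real.exp (-(c * k * Real.log (Real.exp 1 / c)) - 1)) := by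
  by_contra! hsmall
  have hk' : (0 : ℝ) < k := by exact_mod_cast hk
  have hunion :
      ∑ S ∈ powersetCard l univ, ℙ.real {ω | ∀ j ∈ S, Y j ω = 0} ≤ exp (-1) :=
    calc _ ≤ #(powersetCard l (univ : Finset (Fin k))) •
            exp (-(c * k * log (exp 1 / c)) - 1) :=
          sum_le_card_nsmul _ _ _ fun S hS =>
            ENNReal.toReal_le_of_le_ofReal (exp_pos _).le (hsmall S (mem_powersetCard_univ.1 hS))
      _ ≤ exp (l * log (exp 1 * k / l)) * exp (-(c * k * log (exp 1 / c)) - 1) := by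
          rw [card_powersetCard, Finset.card_fin, nsmul_eq_mul]
          gcongr
          exact Nat.choose_le_exp_mul_log k l
      _ = exp (-1) := by
          rw [← exp_add, hl, mul_div_mul_right _ _ hk'.ne']
          ring_nf
  have hlk : l ≤ Fintype.card (Fin k) := by
    rw [Fintype.card_fin]
    exact_mod_cast (show (l : ℝ) ≤ k by rw [hl]; nlinarith)
  have hmarkov := sub_mul_one_sub_sum_measureReal_silent_le_integral ℙ hYmeas hY01 hlk
  rw [Fintype.card_fin, hE, hl] at hmarkov
  have he : exp (-1) < 1 / 2 := by
    rw [exp_neg, one_div]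
    exact inv_strictAnti₀ two_pos (by linarith [exp_one_gt_d9])
  nlinarith [mul_pos (sub_pos.2 hc1) hk']

/-- For 0-1 random variables `Y₁, …, Y_k` (not necessarily
independent) with `E[Σ Yᵢ] = p·k`, where `c ∈ (0,1)`, `p ∈ (0,(1-c)/2)` and
`l = c·k` is an integer, there is a set `S` of `c·k` players such that
`Pr[∀ j ∈ S, Y_j = 0] > e^{-c·k·ln(e/c) - 1}`. -/
theorem find_large_silent_set
    {Ω : Type*} [MeasurableSpace Ω] (ℙ : Measure Ω) [IsProbabilityMeasure ℙ]
    (c p : ℝ) (hc0 : 0 < c) (hc1 : c < 1) (hp0 : 0 < p) (hp : p < (1 - c) / 2)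
    (k : ℕ) (hk : 0 < k) (l : ℕ) (hl : (l : ℝ) = c * k)
    (Y : Fin k → Ω → ℝ) (hYmeas : ∀ j, Measurable (Y j))
    (hY01 : ∀ j ω, Y j ω = 0 ∨ Y j ω = 1)
    (hE : ∫ ω, (∑ j, Y j ω) ∂ℙ = p * k) :
    ∃ S : Finset (Fin k), S.card = l ∧
      ℙ {ω | ∀ j ∈ S, Y j ω = 0} >
        ENNReal.ofReal (Real.exp (-(c * k * Real.log (Real.exp 1 / c)) - 1)) :=
  find_large_silent_set_general ℙ c p hc1 hp k hk l hl Y hYmeas hY01 hE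
end

section
/- There is an absolute constant C such that for all positive integers n, L and every ε ∈ (0,1) there exists a deterministic streaming algorithm with finite state space σ, with log₂|σ| ≤ C·(L/ε)^{2/3}·log₂(2 + n·L/ε), processing streams of updates from [n] × {+1, −1} (with no sign restriction on the running vector), such that on every stream of at most L updates it outputs a vector ẑ ∈ ℝⁿ with ‖ẑ − x‖_∞ ≤ ε·‖x‖₂, where x ∈ ℤⁿ is the final vector of the stream. -/
/-- A deterministic turnstile streaming algorithm over `[n]` with state space
`State`: updates are pairs `(i, s)` with `s = true` meaning `x_i ← x_i + 1`
and `s = false` meaning `x_i ← x_i - 1`. -/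
structure TurnstileAlg (n : ℕ) (State : Type) where
  init : State
  step : State → Fin n × Bool → State

/-- Run the algorithm over the stream of updates. -/
def TurnstileAlg.run {n : ℕ} {State : Type} (A : TurnstileAlg n State)
    (xs : List (Fin n × Bool)) : State :=
  xs.foldl A.step A.init

/-- The running frequency vector of a turnstile stream: `x_i` is the sum of
the signs of the updates to coordinate `i`. -/
def runVec {n : ℕ} (xs : List (Fin n × Bool)) (i : Fin n) : ℤ :=
  (xs.map (fun u => if u.1 = i then (if u.2 then (1 : ℤ) else -1) else 0)).sum

/-- Euclidean norm of an integer vector. -/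
noncomputable def l2norm {n : ℕ} (x : Fin n → ℤ) : ℝ :=
  Real.sqrt (∑ i, ((x i : ℝ)) ^ 2)

/-! A turnstile Misra–Gries summary with `K ≈ (L/ε)^{2/3}` counters tracks every coordinate of `x`
to within `L/K ≤ ε√K`, because the potential `K |fⱼ - xⱼ| + ‖f‖₁` grows by at most one per update.
Beside it the algorithm keeps the first `8K` power sums `∑ᵢ xᵢ iʲ` modulo a prime `p > n(2L+1)`,
which by Vandermonde determine every `4K`-sparse vector with small entries. The output is a
`4K`-sparse vector consistent with the power sums and close to the counters if one exists, and
the counters otherwise: it equals `x` when `x` is `4K`-sparse, and otherwise it is within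
`2L/K ≤ 2ε√K ≤ ε‖x‖₂` of `x`. There are at most `(n(2L+1)+1)^K p^{8K}` states. -/

open Finset

def Bool.toSignInt (b : Bool) : ℤ := if b then 1 else -1

theorem Bool.abs_toSignInt (b : Bool) : |b.toSignInt| = 1 := by
  cases b <;> rfl

theorem runVec_append_singleton {n : ℕ} (xs : List (Fin n × Bool)) (u : Fin n × Bool) :
    runVec (xs ++ [u]) = runVec xs + (Pi.single u.1 u.2.toSignInt : Fin n → ℤ) := by
  ext i
  simp only [runVec, List.map_append, List.sum_append, List.map_singleton, List.sum_singleton,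
    Pi.add_apply, Pi.single_apply, eq_comm (a := i), Bool.toSignInt]

namespace TurnstileAlg

variable {n : ℕ} {σ τ : Type}

theorem run_append_singleton (A : TurnstileAlg n σ) (xs : List (Fin n × Bool))
    (u : Fin n × Bool) : A.run (xs ++ [u]) = A.step (A.run xs) u :=
  List.foldl_concat ..

def prod (A : TurnstileAlg n σ) (B : TurnstileAlg n τ) : TurnstileAlg n (σ × τ) where
  init := (A.init, B.init)
  step s u := (A.step s.1 u, B.step s.2 u)

theorem run_prod (A : TurnstileAlg n σ) (B : TurnstileAlg n τ) (xs : List (Fin n × Bool)) :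
    (A.prod B).run xs = (A.run xs, B.run xs) := by
  induction xs using List.reverseRecOn with
  | nil => rfl
  | append_singleton xs u ih => simp only [run_append_singleton, ih]; rfl

def restrict [DecidableEq σ] (A : TurnstileAlg n σ) (S : Finset σ) (h : A.init ∈ S) :
    TurnstileAlg n S where
  init := ⟨A.init, h⟩
  step s u := if hs : A.step s u ∈ S then ⟨A.step s u, hs⟩ else s

theorem restrict_step_of_mem [DecidableEq σ] (A : TurnstileAlg n σ) {S : Finset σ}
    (h : A.init ∈ S) {s : S} {u : Fin n × Bool} (hs : A.step s u ∈ S) :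
    ((A.restrict S h).step s u : σ) = A.step s u := by
  simp [restrict, hs]

theorem run_restrict [DecidableEq σ] (A : TurnstileAlg n σ) (S : Finset σ) (h : A.init ∈ S)
    (xs : List (Fin n × Bool)) (hxs : ∀ ys, ys <+: xs → A.run ys ∈ S) :
    ((A.restrict S h).run xs : σ) = A.run xs := by
  induction xs using List.reverseRecOn with
  | nil => rfl
  | append_singleton xs u ih =>
    have ih := ih fun ys hys => hxs ys (hys.trans (List.prefix_append _ _))
    have hmem := hxs _ (List.prefix_refl _)
    rw [run_append_singleton] at hmem
    rw [run_append_singleton, run_append_singleton, restrict_step_of_mem _ _ (ih ▸ hmem), ih]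

def ofAddMonoidHom {M : Type} [AddCommMonoid M] (φ : (Fin n → ℤ) →+ M) : TurnstileAlg n M where
  init := 0
  step m u := m + φ (Pi.single u.1 u.2.toSignInt : Fin n → ℤ)

theorem run_ofAddMonoidHom {M : Type} [AddCommMonoid M] (φ : (Fin n → ℤ) →+ M)
    (xs : List (Fin n × Bool)) : (ofAddMonoidHom φ).run xs = φ (runVec xs) := by
  induction xs using List.reverseRecOn with
  | nil => exact (map_zero φ).symm
  | append_singleton xs u ih =>
    rw [run_append_singleton, runVec_append_singleton, map_add, ← ih]; rfl

end TurnstileAlg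

section MisraGries

variable {ι : Type*} [Fintype ι]

def supportFinset (f : ι → ℤ) : Finset ι := {i | f i ≠ 0}

theorem mem_supportFinset {f : ι → ℤ} {i : ι} : i ∈ supportFinset f ↔ f i ≠ 0 := by
  simp [supportFinset]

theorem Int.abs_sign (a : ℤ) : |a.sign| = if a = 0 then 0 else 1 := by
  split_ifs with h
  · simp [h]
  · exact Int.abs_sign_of_ne_zero h

theorem Int.abs_sub_sign (a : ℤ) : |a - a.sign| = |a| - |a.sign| := by
  rcases lt_trichotomy a 0 with h | rfl | h
  · rw [Int.sign_eq_neg_one_of_neg h, abs_of_neg h, abs_of_nonpos (by omega)]; simp; ring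
  · simp
  · rw [Int.sign_eq_one_of_pos h, abs_of_pos h, abs_of_nonneg (by omega)]; simp

theorem sum_abs_sub_sign (f : ι → ℤ) :
    ∑ j, |f j - (f j).sign| = ∑ j, |f j| - #(supportFinset f) := by
  simp only [Int.abs_sub_sign, sum_sub_distrib, Int.abs_sign, supportFinset, card_filter,
    ite_not]
  push_cast
  rfl

variable [DecidableEq ι]

theorem card_supportFinset_sub_le (f g : ι → ℤ) :
    #(supportFinset (f - g)) ≤ #(supportFinset f) + #(supportFinset g) := by
  refine (card_le_card fun i hi => ?_).trans (card_union_le _ _)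
  simp only [mem_union, mem_supportFinset, Pi.sub_apply] at hi ⊢
  omega

def mgUpdate (K : ℕ) (f : ι → ℤ) (i : ι) (s : ℤ) : ι → ℤ :=
  if f i ≠ 0 ∨ #(supportFinset f) < K then f + Pi.single i s else f - fun j => (f j).sign

theorem card_supportFinset_mgUpdate_le {K : ℕ} {f : ι → ℤ} (hK : #(supportFinset f) ≤ K)
    (i : ι) (s : ℤ) : #(supportFinset (mgUpdate K f i s)) ≤ K := by
  unfold mgUpdate
  split_ifs with h
  · refine (card_le_card (s := _) (t := insert i (supportFinset f)) fun j hj => ?_).trans ?_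
    · rcases eq_or_ne j i with rfl | hji
      · exact mem_insert_self _ _
      · simpa [mem_supportFinset, hji] using hj
    · rcases h with h | h
      · rwa [insert_eq_of_mem (mem_supportFinset.2 h)]
      · exact (card_insert_le _ _).trans h
  · refine (card_le_card fun j hj => ?_).trans hK
    rw [mem_supportFinset] at hj ⊢
    intro hfj
    simp [hfj] at hj

theorem mgUpdate_potential_le {K : ℕ} {f x : ι → ℤ} {t : ℤ} (hK : #(supportFinset f) ≤ K)
    (hf : ∀ j, K * |f j - x j| + ∑ j, |f j| ≤ t) (i : ι) {s : ℤ} (hs : |s| ≤ 1) (j : ι) :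
    K * |mgUpdate K f i s j - (x j + (Pi.single i s : ι → ℤ) j)| + ∑ j, |mgUpdate K f i s j|
      ≤ t + 1 := by
  unfold mgUpdate
  split_ifs with h
  · have hsum : ∑ j, |f j + (Pi.single i s : ι → ℤ) j| ≤ ∑ j, |f j| + 1 := calc
      _ ≤ ∑ j, (|f j| + |(Pi.single i s : ι → ℤ) j|) := sum_le_sum fun j _ => abs_add_le _ _
      _ = ∑ j, |f j| + |s| := by
        rw [sum_add_distrib, Fintype.sum_eq_single (f := fun j => |(Pi.single i s : ι → ℤ) j|) i
          fun j hj => by simp [hj], Pi.single_eq_same]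
      _ ≤ ∑ j, |f j| + 1 := by linarith
    simp only [Pi.add_apply, add_sub_add_right_eq_sub]
    linarith [hf j]
  · push Not at h
    have hcard : #(supportFinset f) = K := le_antisymm hK h.2
    have hdrift : |f j - (f j).sign - (x j + (Pi.single i s : ι → ℤ) j)| ≤ |f j - x j| + 1 := by
      rcases eq_or_ne j i with rfl | hji
      · simp only [h.1, Int.sign_zero, Pi.single_eq_same, sub_zero, zero_sub, abs_neg]
        linarith [abs_add_le (x j) s]
      · have := Int.abs_sign (f j)
        rw [Pi.single_eq_of_ne hji, add_zero, sub_right_comm]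
        refine (abs_sub _ _).trans (add_le_add le_rfl ?_)
        split_ifs at this <;> omega
    have := mul_le_mul_of_nonneg_left hdrift (Nat.cast_nonneg (α := ℤ) K)
    simp only [Pi.sub_apply, sum_abs_sub_sign, hcard]
    linarith [hf j]

end MisraGries

namespace TurnstileAlg

def misraGries (n K : ℕ) : TurnstileAlg n (Fin n → ℤ) where
  init := 0
  step f u := mgUpdate K f u.1 u.2.toSignInt

theorem misraGries_run_spec (n K : ℕ) (xs : List (Fin n × Bool)) :
    #(supportFinset ((misraGries n K).run xs)) ≤ K ∧
      ∀ j, K * |(misraGries n K).run xs j - runVec xs j| + ∑ j, |(misraGries n K).run xs j|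
        ≤ xs.length := by
  induction xs using List.reverseRecOn with
  | nil => simp [supportFinset, TurnstileAlg.run, misraGries, runVec]
  | append_singleton xs u ih =>
    rw [run_append_singleton, runVec_append_singleton, List.length_append, List.length_singleton]
    refine ⟨card_supportFinset_mgUpdate_le ih.1 _ _, fun j => ?_⟩
    push_cast
    exact mgUpdate_potential_le ih.1 ih.2 u.1 (u.2.abs_toSignInt.le) j

theorem abs_misraGries_run_le (n K : ℕ) (xs : List (Fin n × Bool)) (j : Fin n) :
    |(misraGries n K).run xs j| ≤ xs.length := by
  have := (misraGries_run_spec n K xs).2 j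
  have := single_le_sum (fun j _ => abs_nonneg ((misraGries n K).run xs j)) (mem_univ j)
  linarith [mul_nonneg (Nat.cast_nonneg (α := ℤ) K)
    (abs_nonneg ((misraGries n K).run xs j - runVec xs j))]

theorem mul_abs_misraGries_run_sub_le (n K : ℕ) (xs : List (Fin n × Bool)) (j : Fin n) :
    K * |(misraGries n K).run xs j - runVec xs j| ≤ xs.length := by
  have := (misraGries_run_spec n K xs).2 j
  have := sum_nonneg fun j (_ : j ∈ univ) => abs_nonneg ((misraGries n K).run xs j)
  linarith

end TurnstileAlg

section SparseBox

variable {ι : Type*} [Fintype ι] [DecidableEq ι]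

noncomputable def sparseBox (B : ℕ) : ℕ → Finset (ι → ℤ)
  | 0 => {0}
  | K + 1 => sparseBox B K ∪
      ((univ ×ˢ Icc (-B : ℤ) B) ×ˢ sparseBox B K).image fun q => Function.update q.2 q.1.1 q.1.2

theorem card_sparseBox_le (B K : ℕ) :
    #(sparseBox (ι := ι) B K) ≤ (Fintype.card ι * (2 * B + 1) + 1) ^ K := by
  induction K with
  | zero => simp [sparseBox]
  | succ K ih =>
    rw [sparseBox, pow_succ]
    refine (card_union_le _ _).trans ?_
    have hIcc : #(Icc (-B : ℤ) B) = 2 * B + 1 := by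
      rw [Int.card_Icc]; omega
    calc _ ≤ #(sparseBox (ι := ι) B K) + Fintype.card ι * (2 * B + 1) * #(sparseBox B K) := by
          gcongr
          refine card_image_le.trans_eq ?_
          rw [card_product, card_product, card_univ, hIcc]
      _ = (#(sparseBox B K)) * (Fintype.card ι * (2 * B + 1) + 1) := by ring
      _ ≤ _ := by gcongr

theorem mem_sparseBox {B K : ℕ} {f : ι → ℤ} (hK : #(supportFinset f) ≤ K)
    (hB : ∀ i, |f i| ≤ B) : f ∈ sparseBox B K := by
  induction K generalizing f with
  | zero =>
    rw [sparseBox, mem_singleton]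
    ext i
    by_contra hi
    exact notMem_empty i (card_eq_zero.1 (Nat.le_zero.1 hK) ▸ mem_supportFinset.2 hi)
  | succ K ih =>
    rw [sparseBox, mem_union, mem_image]
    by_cases hK' : #(supportFinset f) ≤ K
    · exact .inl (ih hK' hB)
    obtain ⟨i, hi⟩ : (supportFinset f).Nonempty := card_pos.1 (by omega)
    refine .inr ⟨((i, f i), Function.update f i 0), ?_, by simp⟩
    refine mem_product.2 ⟨mem_product.2 ⟨mem_univ _, mem_Icc.2 (abs_le.1 (hB i))⟩, ih ?_ ?_⟩
    · have : supportFinset (Function.update f i 0) = (supportFinset f).erase i := by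
        ext j
        rcases eq_or_ne j i with rfl | hj <;> simp [mem_supportFinset, *]
      rw [this, card_erase_of_mem hi]
      omega
    · intro j
      rcases eq_or_ne j i with rfl | hj <;> simp [*]

end SparseBox

theorem Finset.eq_zero_of_forall_sum_mul_pow_eq_zero {R ι : Type*} [CommRing R] [IsDomain R]
    {s : Finset ι} {α v : ι → R} (hα : Set.InjOn α s)
    (h : ∀ j < #s, ∑ i ∈ s, v i * α i ^ j = 0) {i : ι} (hi : i ∈ s) : v i = 0 := by
  set e := s.equivFin
  have := Matrix.eq_zero_of_forall_pow_sum_mul_pow_eq_zero (f := fun k => α (e.symm k))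
    (v := fun k => v (e.symm k)) (fun a b hab => e.symm.injective
      (Subtype.ext (hα (e.symm a).2 (e.symm b).2 hab))) fun k => by
    rw [e.symm.sum_comp (fun i : s => v i * α i ^ (k : ℕ))]
    exact (sum_coe_sort s fun i => v i * α i ^ (k : ℕ)).trans (h k k.2)
  simpa using congrFun this (e ⟨i, hi⟩)

def powerSumSketch (p R n : ℕ) : (Fin n → ℤ) →+ (Fin R → ZMod p) where
  toFun x j := ∑ i, (x i : ZMod p) * ((i : ℕ) : ZMod p) ^ (j : ℕ)
  map_zero' := by ext; simp
  map_add' x y := by ext; simp [add_mul, sum_add_distrib]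

theorem eq_zero_of_powerSumSketch_eq_zero {p R n : ℕ} [Fact p.Prime] (hn : n ≤ p)
    {w : Fin n → ℤ} (hR : #(supportFinset w) ≤ R) (hw : ∀ i, |w i| < p)
    (h : powerSumSketch p R n w = 0) : w = 0 := by
  ext i
  by_contra hi
  refine hi (Int.eq_zero_of_abs_lt_dvd ((ZMod.intCast_zmod_eq_zero_iff_dvd _ _).1 ?_) (hw i))
  refine eq_zero_of_forall_sum_mul_pow_eq_zero (α := fun i : Fin n => ((i : ℕ) : ZMod p))
    (v := fun i => (w i : ZMod p))
    (fun a _ b _ hab => Fin.ext ?_) (fun j hj => ?_) (mem_supportFinset.2 hi)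
  · simpa [ZMod.val_natCast_of_lt (a.2.trans_le hn), ZMod.val_natCast_of_lt (b.2.trans_le hn)]
      using congrArg ZMod.val hab
  · rw [sum_subset (subset_univ _) fun i _ hi => by simp [not_not.1 (mt mem_supportFinset.2 hi)]]
    exact congrFun h ⟨j, hj.trans_le hR⟩

section SparseRecovery

variable {ι M : Type*} [Fintype ι] [AddCommGroup M]

open Classical in
noncomputable def sparseRecover (φ : (ι → ℤ) →+ M) (k D : ℕ) (f : ι → ℤ) (m : M) : ι → ℤ :=
  if h : ∃ y, #(supportFinset y) ≤ k ∧ φ y = m ∧ ∀ i, |y i - f i| ≤ D then h.choose else f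

theorem abs_sparseRecover_sub_le (φ : (ι → ℤ) →+ M) (k : ℕ) {D : ℕ} {f x : ι → ℤ}
    (hf : ∀ i, |f i - x i| ≤ D) (m : M) (i : ι) :
    |sparseRecover φ k D f m i - x i| ≤ 2 * D := by
  unfold sparseRecover
  split_ifs with h
  · have := h.choose_spec.2.2 i
    linarith [abs_sub_le (h.choose i) (f i) (x i), hf i]
  · linarith [hf i, (Nat.cast_nonneg D : (0 : ℤ) ≤ D)]

theorem sparseRecover_eq_of_card_supportFinset_le [DecidableEq ι] {φ : (ι → ℤ) →+ M} {k D : ℕ}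
    (hφ : ∀ w, #(supportFinset w) ≤ 2 * k → (∀ i, |w i| ≤ 2 * D) → φ w = 0 → w = 0)
    {f x : ι → ℤ} (hf : ∀ i, |f i - x i| ≤ D) (hx : #(supportFinset x) ≤ k) :
    sparseRecover φ k D f (φ x) = x := by
  have hex : ∃ y, #(supportFinset y) ≤ k ∧ φ y = φ x ∧ ∀ i, |y i - f i| ≤ D :=
    ⟨x, hx, rfl, fun i => abs_sub_comm (f i) (x i) ▸ hf i⟩
  have hrec : sparseRecover φ k D f (φ x) = hex.choose := dif_pos hex
  obtain ⟨hyk, hyx, -⟩ := hex.choose_spec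
  rw [← sub_eq_zero]
  refine hφ _ ?_ (fun i => abs_sparseRecover_sub_le φ k hf (φ x) i) ?_
  · grw [card_supportFinset_sub_le, hrec, hyk, hx]
    omega
  · rw [map_sub, hrec, hyx, sub_self]

end SparseRecovery

theorem sqrt_card_supportFinset_le_l2norm {n : ℕ} (x : Fin n → ℤ) :
    √(#(supportFinset x) : ℝ) ≤ l2norm x := by
  refine Real.sqrt_le_sqrt ?_
  rw [card_eq_sum_ones, Nat.cast_sum, Nat.cast_one]
  refine (sum_le_sum fun i hi => ?_).trans
    (sum_le_sum_of_subset_of_nonneg (subset_univ _) fun i _ _ => sq_nonneg (x i : ℝ))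
  have : (1 : ℤ) ≤ |x i| := Int.one_le_abs (mem_supportFinset.1 hi)
  rw [← sq_abs, ← Int.cast_abs]
  exact one_le_pow₀ (by exact_mod_cast this)

theorem div_le_mul_sqrt_of_rpow_le {a ε K : ℝ} (ha : 0 < a) (hε : 0 < ε)
    (hK : (a / ε) ^ ((2 : ℝ) / 3) ≤ K) : a / K ≤ ε * √K := by
  have hK0 : 0 < K := (Real.rpow_pos_of_pos (div_pos ha hε) _).trans_le hK
  have : a / ε ≤ K * √K := calc
    a / ε = ((a / ε) ^ ((2 : ℝ) / 3)) ^ ((3 : ℝ) / 2) := by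
      rw [← Real.rpow_mul (div_pos ha hε).le]; norm_num
    _ ≤ K ^ ((3 : ℝ) / 2) := Real.rpow_le_rpow (by positivity) hK (by norm_num)
    _ = K * √K := by
      rw [show (3 : ℝ) / 2 = 1 + 1 / 2 by norm_num, Real.rpow_add hK0, Real.rpow_one,
        Real.sqrt_eq_rpow]
  rw [div_le_iff₀ hε] at this
  rw [div_le_iff₀ hK0]
  linarith

open TurnstileAlg

section LinfSketch

variable (n L K p : ℕ)

noncomputable def linfSketch :
    TurnstileAlg n (sparseBox (ι := Fin n) L K × (Fin (8 * K) → ZMod p)) :=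
  ((misraGries n K).restrict (sparseBox L K)
    (mem_sparseBox (f := 0) (by simp [supportFinset]) (by simp))).prod
      (ofAddMonoidHom (powerSumSketch p (8 * K) n))

noncomputable def linfSketchOutput (s : sparseBox (ι := Fin n) L K × (Fin (8 * K) → ZMod p)) :
    Fin n → ℤ :=
  sparseRecover (powerSumSketch p (8 * K) n) (4 * K) (L / K) s.1 s.2

theorem card_linfSketch_state_le {n L p : ℕ} [NeZero p] (hp : n * (2 * L + 1) < p) (K : ℕ) :
    Fintype.card (sparseBox (ι := Fin n) L K × (Fin (8 * K) → ZMod p)) ≤ p ^ (9 * K) := by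
  rw [Fintype.card_prod, Fintype.card_coe, Fintype.card_fun, ZMod.card, Fintype.card_fin,
    show 9 * K = K + 8 * K by ring, pow_add]
  gcongr
  exact (card_sparseBox_le L K).trans (by rw [Fintype.card_fin]; gcongr; omega)

variable {n L K p}

theorem linfSketch_run {xs : List (Fin n × Bool)} (hxs : xs.length ≤ L) :
    (((linfSketch n L K p).run xs).1 : Fin n → ℤ) = (misraGries n K).run xs ∧
      ((linfSketch n L K p).run xs).2 = powerSumSketch p (8 * K) n (runVec xs) := by
  rw [linfSketch, run_prod, run_ofAddMonoidHom]
  refine ⟨run_restrict _ _ _ _ fun ys hys => mem_sparseBox (misraGries_run_spec n K ys).1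
    fun j => ?_, rfl⟩
  exact (abs_misraGries_run_le n K ys j).trans (by exact_mod_cast hys.length_le.trans hxs)

theorem linfSketchOutput_spec [Fact p.Prime] (hnp : n ≤ p) (hLp : 2 * L < p) (hK : 0 < K)
    {xs : List (Fin n × Bool)} (hxs : xs.length ≤ L) :
    (∀ i, |linfSketchOutput n L K p ((linfSketch n L K p).run xs) i - runVec xs i|
        ≤ 2 * (L / K : ℕ)) ∧
      (#(supportFinset (runVec xs)) ≤ 4 * K →
        linfSketchOutput n L K p ((linfSketch n L K p).run xs) = runVec xs) := by
  obtain ⟨hf, hφ⟩ := linfSketch_run (K := K) (p := p) hxs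
  have hclose (i : Fin n) :
      |((linfSketch n L K p).run xs).1.1 i - runVec xs i| ≤ (L / K : ℕ) := by
    rw [hf, Int.natCast_div, Int.le_ediv_iff_mul_le (by omega), mul_comm]
    exact (mul_abs_misraGries_run_sub_le n K xs i).trans (by exact_mod_cast hxs)
  refine ⟨abs_sparseRecover_sub_le _ _ hclose _, fun hsparse => ?_⟩
  rw [linfSketchOutput, hφ]
  refine sparseRecover_eq_of_card_supportFinset_le (fun w hw hwD hw0 => ?_) hclose hsparse
  refine eq_zero_of_powerSumSketch_eq_zero hnp (by omega) (fun i => ?_) hw0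
  have : ((L / K : ℕ) : ℤ) ≤ L := by exact_mod_cast Nat.div_le_self L K
  linarith [hwD i, (by exact_mod_cast hLp : (2 * L : ℤ) < p)]

end LinfSketch

theorem abs_linfSketchOutput_sub_le {n L K p : ℕ} [Fact p.Prime] (hnp : n ≤ p) (hLp : 2 * L < p)
    (hL : 0 < L) {ε : ℝ} (hε : 0 < ε) (hK : ((L : ℝ) / ε) ^ ((2 : ℝ) / 3) ≤ K)
    {xs : List (Fin n × Bool)} (hxs : xs.length ≤ L) (i : Fin n) :
    |(linfSketchOutput n L K p ((linfSketch n L K p).run xs) i : ℝ) - runVec xs i|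
      ≤ ε * l2norm (runVec xs) := by
  have hK0 : 0 < K := by
    have := (Real.rpow_pos_of_pos (div_pos (Nat.cast_pos.2 hL) hε) ((2 : ℝ) / 3)).trans_le hK
    exact_mod_cast this
  obtain ⟨hclose, hexact⟩ := linfSketchOutput_spec (p := p) hnp hLp hK0 hxs
  have hD : ((L / K : ℕ) : ℝ) ≤ L / K := Nat.cast_div_le
  generalize L / K = D at hclose hD
  by_cases hsparse : #(supportFinset (runVec xs)) ≤ 4 * K
  · rw [hexact hsparse, sub_self, abs_zero]
    exact mul_nonneg hε.le (Real.sqrt_nonneg _)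
  calc _ = ((|linfSketchOutput n L K p ((linfSketch n L K p).run xs) i - runVec xs i| : ℤ) : ℝ) :=
        by push_cast; rfl
    _ ≤ 2 * (D : ℝ) := by exact_mod_cast hclose i
    _ ≤ 2 * (ε * √K) := by
        gcongr
        exact hD.trans (div_le_mul_sqrt_of_rpow_le (Nat.cast_pos.2 hL) hε hK)
    _ = ε * √(4 * K) := by
        rw [Real.sqrt_mul (by norm_num), show (4 : ℝ) = 2 ^ 2 by norm_num,
          Real.sqrt_sq (by norm_num)]
        ring
    _ ≤ ε * √(#(supportFinset (runVec xs)) : ℝ) := by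
        gcongr
        exact_mod_cast (not_le.1 hsparse).le
    _ ≤ ε * l2norm (runVec xs) := by
        gcongr
        exact sqrt_card_supportFinset_le_l2norm _

theorem logb_card_linfSketch_state_le {n L : ℕ} (hL : 0 < L) {ε : ℝ} (hε : 0 < ε) (hε1 : ε < 1)
    {p : ℕ} [Fact p.Prime] (hnLp : n * (2 * L + 1) < p) (hp2 : p ≤ 2 * (n * (2 * L + 1) + 1))
    (K : ℕ) :
    Real.logb 2 (Fintype.card (sparseBox (ι := Fin n) L K × (Fin (8 * K) → ZMod p)))
      ≤ 18 * K * Real.logb 2 (2 + n * L / ε) := by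
  have hnL : (n * L : ℝ) ≤ n * L / ε := le_div_self (by positivity) hε hε1.le
  have hpm : (p : ℝ) ≤ (2 + n * L / ε) ^ 2 := by
    have : (p : ℝ) ≤ 2 * (n * (2 * L + 1) + 1) := by exact_mod_cast hp2
    have : (1 : ℝ) ≤ L := by exact_mod_cast hL
    nlinarith [sq_nonneg ((n : ℝ) * L / ε - 1), mul_le_mul_of_nonneg_left this (Nat.cast_nonneg n)]
  have : Nonempty (sparseBox (ι := Fin n) L K × (Fin (8 * K) → ZMod p)) :=
    ⟨(linfSketch n L K p).init⟩
  calc _ ≤ Real.logb 2 ((p : ℝ) ^ (9 * K)) := Real.logb_le_logb_of_le (by norm_num)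
        (by exact_mod_cast Fintype.card_pos) (by exact_mod_cast card_linfSketch_state_le hnLp K)
    _ ≤ Real.logb 2 (((2 + n * L / ε) ^ 2) ^ (9 * K)) :=
      Real.logb_le_logb_of_le (by norm_num) (by have := (Fact.out : p.Prime).pos; positivity)
        (by gcongr)
    _ = 18 * K * Real.logb 2 (2 + n * L / ε) := by
      rw [Real.logb_pow, Real.logb_pow]; push_cast; ring

/-- There is an absolute constant `C > 0` such that the
`ℓ_∞/ℓ₂` sparse-recovery guarantee `‖ẑ - x‖_∞ ≤ ε‖x‖₂` is achievable
deterministically on every general turnstile stream of at most `L`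
`±1` updates over `[n]`, using `C·(L/ε)^{2/3}·log₂(2 + nL/ε)` bits of space. -/
theorem general_turnstile_linf_l2_upper_bound :
    ∃ C : ℝ, 0 < C ∧
      ∀ (n L : ℕ), 0 < n → 0 < L → ∀ (ε : ℝ), 0 < ε → ε < 1 →
        ∃ (State : Type) (inst : Fintype State) (A : TurnstileAlg n State)
          (out : State → (Fin n → ℝ)),
          Real.logb 2 (@Fintype.card State inst) ≤
            C * ((L / ε) ^ ((2 : ℝ) / 3)) * Real.logb 2 (2 + n * L / ε) ∧
          ∀ xs : List (Fin n × Bool), xs.length ≤ L →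
            ∀ i : Fin n,
              |out (A.run xs) i - ((runVec xs i : ℝ))| ≤ ε * l2norm (runVec xs) := by
  refine ⟨36, by norm_num, fun n L _ hL ε hε hε1 => ?_⟩
  set Q := ((L : ℝ) / ε) ^ ((2 : ℝ) / 3)
  have hQ : 1 ≤ Q := Real.one_le_rpow ((one_le_div hε).2 (by
    linarith [(by exact_mod_cast hL : (1 : ℝ) ≤ L)])) (by norm_num)
  have hKQ : (⌈Q⌉₊ : ℝ) ≤ 2 * Q := by linarith [Nat.ceil_lt_add_one (zero_le_one.trans hQ)]
  obtain ⟨p, hp, hnLp, hp2⟩ := Nat.exists_prime_lt_and_le_two_mul (n * (2 * L + 1) + 1) (by omega)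
  have : Fact p.Prime := ⟨hp⟩
  refine ⟨_, inferInstance, linfSketch n L ⌈Q⌉₊ p, fun s i => linfSketchOutput n L ⌈Q⌉₊ p s i,
    ?_, fun xs hxs i => abs_linfSketchOutput_sub_le (by nlinarith) (by nlinarith) hL hε
      (Nat.le_ceil Q) hxs i⟩
  have hm : 0 ≤ Real.logb 2 (2 + n * L / ε) :=
    Real.logb_nonneg (by norm_num) (by linarith [(by positivity : (0 : ℝ) ≤ n * L / ε)])
  calc _ ≤ 18 * ⌈Q⌉₊ * Real.logb 2 (2 + n * L / ε) :=
        logb_card_linfSketch_state_le hL hε hε1 (by omega) hp2 _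
    _ ≤ 36 * Q * Real.logb 2 (2 + n * L / ε) := by nlinarith
end
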